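/- arXiv:2601.19678 — 3 statements merged into one kernel-verified Lean document; each statement's English description precedes it below -/
import Mathlib

section
/- Suppose the complex composition operator T_f on L^p(X;ℂ) is supercyclic. Then the real composition operator T̃_f on L^p(X;ℝ) is ℝ-supercyclic, i.e., there exists ψ ∈ L^p(X;ℝ) such that {λ · (ψ ∘ f^k) : λ ∈ ℝ, k ∈ ℕ} is dense in L^p(X;ℝ). -/
/-!
Let `φ` be a supercyclic vector of `T_f` and put `ψ_t = Re ((1 + i t) φ) = Re φ - t Im φ`.
Taking real parts commutes with composition by `f`, so if `c T_f^n φ` approximates a real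
function `g` and `w = c / |c|`, then taking the real part of `ζ w̄ (c T_f^n φ - g)` shows that
`|c| T̃_f^n (Re (ζ φ))` approximates `Re (ζ w̄) g`. Along a sequence of approximants whose
directions `w` converge to some `w₀`, this puts `g` in the closure of the real projective orbit
of `ψ_t` for every `t` except the at most one with `Re ((1 + i t) w̄₀) = 0`. Testing density
against a countable dense subset of the separable space `L^p(X; ℝ)`, only countably many `t`
fail, and `ℝ` is uncountable.
-/

open MeasureTheory Filter Topology TopologicalSpace ComplexConjugate Complex
open scoped ENNReal NNReal

/-- `x` is a supercyclic vector of `T` exactly when this set is dense. -/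
def scaledOrbit (𝕜 : Type*) {E : Type*} [NormedField 𝕜] [NormedAddCommGroup E] [NormedSpace 𝕜 E]
    (T : E →L[𝕜] E) (x : E) : Set E :=
  {y | ∃ (c : 𝕜) (n : ℕ), 1 ≤ n ∧ y = c • (T ^ n) x}

section scaledOrbit

variable {𝕜 E : Type*} [NormedField 𝕜] [NormedAddCommGroup E] [NormedSpace 𝕜 E]

theorem zero_mem_scaledOrbit (T : E →L[𝕜] E) (x : E) : 0 ∈ scaledOrbit 𝕜 T x :=
  ⟨0, 1, le_rfl, (zero_smul 𝕜 _).symm⟩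

theorem separableSpace_of_dense_scaledOrbit [SeparableSpace 𝕜]
    {T : E →L[𝕜] E} {x : E} (hx : Dense (scaledOrbit 𝕜 T x)) :
    SeparableSpace E := by
  have hsep : IsSeparable (⋃ n : ℕ, Set.range fun c : 𝕜 => c • (T ^ n) x) :=
    isSeparable_iUnion.2 fun n =>
      isSeparable_range (continuous_id.smul continuous_const)
  have hsub : scaledOrbit 𝕜 T x ⊆ ⋃ n : ℕ, Set.range fun c : 𝕜 => c • (T ^ n) x := by
    rintro _ ⟨c, n, -, rfl⟩
    exact Set.mem_iUnion.2 ⟨n, c, rfl⟩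
  simpa [hx.closure_eq, isSeparable_univ_iff] using (hsep.mono hsub).closure

end scaledOrbit

theorem exists_dense_of_countable_setOf_notMem_closure {ι X : Type*} [Uncountable ι]
    [TopologicalSpace X] [SeparableSpace X] (O : ι → Set X)
    (hO : ∀ x, {i | x ∉ closure (O i)}.Countable) : ∃ i, Dense (O i) := by
  obtain ⟨D, hD, hDd⟩ := exists_countable_dense X
  have hbad : {i | ¬ Dense (O i)} ⊆ ⋃ x ∈ D, {i | x ∉ closure (O i)} := by
    intro i hi
    obtain ⟨x, hxD, hx⟩ := hDd.exists_mem_open isClosed_closure.isOpen_compl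
      (Set.nonempty_compl.2 fun h => hi (dense_iff_closure_eq.2 h))
    exact Set.mem_biUnion hxD hx
  by_contra! h
  exact Set.not_countable_univ <| (hD.biUnion fun x _ => hO x).mono fun i _ => hbad (h i)

section RealPart

variable {E F : Type*} [NormedAddCommGroup E] [NormedSpace ℂ E] [NormedSpace ℝ E]
  [NormedAddCommGroup F] [NormedSpace ℝ F]
  {T : E →L[ℂ] E} {S : F →L[ℝ] F} {R : E →L[ℝ] F} {J : F → E}

theorem norm_smul_pow_apply_sub_le (hRT : Function.Semiconj R T S)
    (hRJ : ∀ (z : ℂ) (g : F), R (z • J g) = z.re • g) (hR : ∀ h, ‖R h‖ ≤ ‖h‖)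
    (c ζ : ℂ) (n : ℕ) (φ : E) (g : F) :
    ‖‖c‖ • (S ^ n) (R (ζ • φ)) - (ζ * conj (c / ‖c‖)).re • g‖ ≤ ‖ζ‖ * ‖c • (T ^ n) φ - J g‖ := by
  set z := ζ * conj (c / ‖c‖)
  have hz : ‖z‖ ≤ ‖ζ‖ := by
    have : ‖c / ‖c‖‖ ≤ 1 := by simpa using div_self_le_one ‖c‖
    simpa [z] using mul_le_mul_of_nonneg_left this (norm_nonneg ζ)
  have hzc : z * c = algebraMap ℝ ℂ ‖c‖ * ζ := by
    rw [Complex.coe_algebraMap]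
    rcases eq_or_ne c 0 with rfl | hc
    · simp [z]
    · have : (‖c‖ : ℂ) ≠ 0 := by simpa using hc
      simp only [z, map_div₀, conj_ofReal]
      field_simp
      rw [mul_assoc, conj_mul']
  have key : R (z • (c • (T ^ n) φ - J g)) = ‖c‖ • (S ^ n) (R (ζ • φ)) - z.re • g := by
    rw [smul_sub, map_sub, hRJ, smul_smul, hzc, mul_smul, ← map_smul, algebraMap_smul,
      map_smul, FunLike.coe_pow_eq_iterate, FunLike.coe_pow_eq_iterate, (hRT.iterate_right n).eq]
  calc _ = ‖R (z • (c • (T ^ n) φ - J g))‖ := by rw [key]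
    _ ≤ ‖z‖ * ‖c • (T ^ n) φ - J g‖ := (hR _).trans (norm_smul z _).le
    _ ≤ ‖ζ‖ * ‖c • (T ^ n) φ - J g‖ := by gcongr

theorem exists_forall_mem_closure_scaledOrbit (hRT : Function.Semiconj R T S)
    (hRJ : ∀ (z : ℂ) (g : F), R (z • J g) = z.re • g) (hR : ∀ h, ‖R h‖ ≤ ‖h‖)
    {φ : E} (hφ : Dense (scaledOrbit ℂ T φ)) {g : F} (hg : g ≠ 0) :
    ∃ w : ℂ, w ≠ 0 ∧ ∀ ζ : ℂ, (ζ * conj w).re ≠ 0 → g ∈ closure (scaledOrbit ℝ S (R (ζ • φ))) := by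
  have hJg : J g ≠ 0 := fun h => hg (by simpa [h] using (hRJ 1 g).symm)
  obtain ⟨a, ha, hlim⟩ := mem_closure_iff_seq_limit.1 (hφ.closure_eq ▸ Set.mem_univ (J g))
  choose c n hn hca using ha
  set u : ℕ → ℂ := fun m => c m / ‖c m‖
  have hu : ∀ᶠ m in atTop, u m ∈ Metric.sphere 0 1 := by
    filter_upwards [hlim.eventually_ne hJg] with m hm
    have hc : c m ≠ 0 := by rintro h; simp [hca m, h] at hm
    simp [u, hc]
  obtain ⟨w, hw, σ, hσ, huw⟩ := (isCompact_sphere (0 : ℂ) 1).tendsto_subseq' hu.frequently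
  refine ⟨w, ne_zero_of_mem_unit_sphere ⟨w, hw⟩, fun ζ hζ => ?_⟩
  set ψ := R (ζ • φ)
  set r : ℕ → ℝ := fun m => (ζ * conj (u (σ m))).re
  have hr : Tendsto r atTop (𝓝 (ζ * conj w).re) :=
    (continuous_re.tendsto _).comp (tendsto_const_nhds.mul ((continuous_conj.tendsto w).comp huw))
  have herr : Tendsto (fun m => ‖c (σ m)‖ • (S ^ n (σ m)) ψ - r m • g) atTop (𝓝 0) := by
    refine squeeze_zero_norm (a := fun m => ‖ζ‖ * ‖a (σ m) - J g‖) (fun m => ?_) ?_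
    · rw [hca]
      exact norm_smul_pow_apply_sub_le hRT hRJ hR _ _ _ _ _
    · simpa using ((tendsto_iff_norm_sub_tendsto_zero.1 hlim).comp hσ.tendsto_atTop).const_mul ‖ζ‖
  have hy : Tendsto (fun m => (r m)⁻¹ • (‖c (σ m)‖ • (S ^ n (σ m)) ψ)) atTop
      (𝓝 (((ζ * conj w).re)⁻¹ • (0 + (ζ * conj w).re • g))) := by
    refine (hr.inv₀ hζ).smul ?_
    simpa using herr.add (hr.smul_const g)
  rw [zero_add, inv_smul_smul₀ hζ] at hy
  refine mem_closure_of_tendsto hy (Eventually.of_forall fun m => ?_)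
  exact ⟨(r m)⁻¹ * ‖c (σ m)‖, n (σ m), hn (σ m), (mul_smul _ _ _).symm⟩

theorem exists_dense_scaledOrbit_of_semiconj (hRT : Function.Semiconj R T S)
    (hRJ : ∀ (z : ℂ) (g : F), R (z • J g) = z.re • g) (hR : ∀ h, ‖R h‖ ≤ ‖h‖)
    {φ : E} (hφ : Dense (scaledOrbit ℂ T φ)) : ∃ ψ : F, Dense (scaledOrbit ℝ S ψ) := by
  have := separableSpace_of_dense_scaledOrbit hφ
  have hRsurj : Function.Surjective R := fun g => ⟨J g, by simpa using hRJ 1 g⟩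
  have := hRsurj.denseRange.separableSpace R.continuous
  suffices ∀ g : F, {t : ℝ | g ∉ closure (scaledOrbit ℝ S (R ((1 + t * I) • φ)))}.Countable by
    obtain ⟨t, ht⟩ := exists_dense_of_countable_setOf_notMem_closure _ this
    exact ⟨_, ht⟩
  intro g
  rcases eq_or_ne g 0 with rfl | hg
  · simp [subset_closure (zero_mem_scaledOrbit _ _)]
  obtain ⟨w, hw0, hw⟩ := exists_forall_mem_closure_scaledOrbit hRT hRJ hR hφ hg
  refine Set.Subsingleton.countable fun s hs t ht => ?_
  have hs' := of_not_not (mt (hw _) hs)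
  have ht' := of_not_not (mt (hw _) ht)
  -- `Re ((1 + t i) w̄) = w.re + t w.im`, which vanishes for at most one `t` since `w ≠ 0`.
  simp only [mul_re, add_re, one_re, ofReal_re, I_re, mul_zero, ofReal_im, I_im, mul_one, sub_self,
    add_zero, conj_re, one_mul, add_im, one_im, mul_im, zero_add, conj_im, mul_neg, sub_neg_eq_add]
    at hs' ht'
  have him : w.im ≠ 0 := fun h => hw0 (Complex.ext (by simpa [h] using hs') h)
  exact mul_right_cancel₀ him (by linarith)

end RealPart

section Lp

variable {X : Type*} [MeasurableSpace X] {μ : Measure X} {p : ℝ≥0∞} [Fact (1 ≤ p)]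

theorem tendsto_ae_of_preimage_null {Y : Type*} [MeasurableSpace Y] {ν : Measure Y} {f : X → Y}
    (hf : ∀ B : Set Y, MeasurableSet B → ν B = 0 → μ (f ⁻¹' B) = 0) :
    Tendsto f (ae μ) (ae ν) := fun s hs =>
  measure_mono_null (Set.preimage_mono (subset_toMeasurable ν sᶜ))
    (hf _ (measurableSet_toMeasurable ν sᶜ) ((measure_toMeasurable sᶜ).trans hs))

theorem semiconj_reCLM_compLpL {f : X → X}
    (hf : ∀ B : Set X, MeasurableSet B → μ B = 0 → μ (f ⁻¹' B) = 0)
    {Tc : Lp ℂ p μ →L[ℂ] Lp ℂ p μ} (hTc : ∀ φ : Lp ℂ p μ, (Tc φ : X → ℂ) =ᵐ[μ] (φ : X → ℂ) ∘ f)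
    {Tr : Lp ℝ p μ →L[ℝ] Lp ℝ p μ} (hTr : ∀ φ : Lp ℝ p μ, (Tr φ : X → ℝ) =ᵐ[μ] (φ : X → ℝ) ∘ f) :
    Function.Semiconj (reCLM.compLpL p μ) Tc Tr := fun φ => by
  apply Lp.ext
  filter_upwards [hTr (reCLM.compLpL p μ φ),
    (reCLM.coeFn_compLpL φ).comp_tendsto (tendsto_ae_of_preimage_null hf),
    reCLM.coeFn_compLpL (Tc φ), hTc φ] with x h₁ h₂ h₃ h₄
  simp only [Function.comp_apply] at h₁ h₂ h₄
  rw [h₁, h₂, h₃, h₄]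

theorem reCLM_compLpL_smul_ofRealCLM_compLpL (z : ℂ) (g : Lp ℝ p μ) :
    reCLM.compLpL p μ (z • ofRealCLM.compLpL p μ g) = z.re • g := by
  apply Lp.ext
  filter_upwards [reCLM.coeFn_compLpL (z • ofRealCLM.compLpL p μ g),
    Lp.coeFn_smul z (ofRealCLM.compLpL p μ g), ofRealCLM.coeFn_compLpL g,
    Lp.coeFn_smul z.re g] with x h₁ h₂ h₃ h₄
  simp [h₁, h₂, h₃, h₄]

theorem norm_reCLM_compLpL_apply_le (φ : Lp ℂ p μ) : ‖reCLM.compLpL p μ φ‖ ≤ ‖φ‖ := by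
  simpa using (reCLM.compLpL p μ).le_of_opNorm_le
    ((ContinuousLinearMap.norm_compLpL_le _).trans reCLM_norm.le) φ

end Lp

theorem stmt1_general {X : Type*} [MeasurableSpace X] (μ : Measure X) (f : X → X)
    (hns : ∀ B : Set X, MeasurableSet B → μ B = 0 → μ (f ⁻¹' B) = 0)
    (p : ℝ≥0∞) [Fact (1 ≤ p)]
    (Tc : Lp ℂ p μ →L[ℂ] Lp ℂ p μ)
    (hTc : ∀ φ : Lp ℂ p μ, (Tc φ : X → ℂ) =ᵐ[μ] (φ : X → ℂ) ∘ f)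
    (Tr : Lp ℝ p μ →L[ℝ] Lp ℝ p μ)
    (hTr : ∀ φ : Lp ℝ p μ, (Tr φ : X → ℝ) =ᵐ[μ] (φ : X → ℝ) ∘ f)
    (hsc : ∃ φ : Lp ℂ p μ,
      Dense {y : Lp ℂ p μ | ∃ (c : ℂ) (n : ℕ), 1 ≤ n ∧ y = c • ((Tc ^ n) φ)}) :
    ∃ ψ : Lp ℝ p μ,
      Dense {y : Lp ℝ p μ | ∃ (l : ℝ) (k : ℕ), 1 ≤ k ∧ y = l • ((Tr ^ k) ψ)} :=
  let ⟨_, hφ⟩ := hsc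
  exists_dense_scaledOrbit_of_semiconj (semiconj_reCLM_compLpL hns hTc hTr)
    reCLM_compLpL_smul_ofRealCLM_compLpL norm_reCLM_compLpL_apply_le hφ

/-- If the complex composition operator `T_f` on `L^p(X;ℂ)` is supercyclic,
then the real composition operator `T̃_f` on `L^p(X;ℝ)` is `ℝ`-supercyclic. -/
theorem stmt1 {X : Type*} [MeasurableSpace X] (μ : Measure X) [SigmaFinite μ]
    (f : X → X) (hf : Measurable f)
    (hns : ∀ B : Set X, MeasurableSet B → μ B = 0 → μ (f ⁻¹' B) = 0)
    (p : ℝ≥0∞) [Fact (1 ≤ p)] (hp2 : p ≠ ⊤)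
    (Tc : Lp ℂ p μ →L[ℂ] Lp ℂ p μ)
    (hTc : ∀ φ : Lp ℂ p μ, (Tc φ : X → ℂ) =ᵐ[μ] (φ : X → ℂ) ∘ f)
    (Tr : Lp ℝ p μ →L[ℝ] Lp ℝ p μ)
    (hTr : ∀ φ : Lp ℝ p μ, (Tr φ : X → ℝ) =ᵐ[μ] (φ : X → ℝ) ∘ f)
    (hsc : ∃ φ : Lp ℂ p μ,
      Dense {y : Lp ℂ p μ | ∃ (c : ℂ) (n : ℕ), 1 ≤ n ∧ y = c • ((Tc ^ n) φ)}) :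
    ∃ ψ : Lp ℝ p μ,
      Dense {y : Lp ℝ p μ | ∃ (l : ℝ) (k : ℕ), 1 ≤ k ∧ y = l • ((Tr ^ k) ψ)} :=
  stmt1_general μ f hns p Tc hTc Tr hTr hsc
end

section
/- If the real composition operator T̃_f : L^p(X;ℝ) → L^p(X;ℝ) is weakly mixing (i.e., T̃_f × T̃_f is hypercyclic on L^p(X;ℝ) × L^p(X;ℝ)), then the complex composition operator T_f : L^p(X;ℂ) → L^p(X;ℂ) is hypercyclic. Moreover, if (φ₁, φ₂) is a hypercyclic vector for T̃_f × T̃_f, then φ₁ + iφ₂ is a hypercyclic vector for T_f. -/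
open MeasureTheory Filter
open scoped ENNReal NNReal

/-!
The map `(φ₁, φ₂) ↦ φ₁ + i φ₂` from `L^p(X;ℝ) × L^p(X;ℝ)` onto `L^p(X;ℂ)` is continuous and
surjective, and it intertwines `T̃_f × T̃_f` with `T_f` because composition with `f` acts on
real and imaginary parts separately. Any such semiconjugacy maps dense orbits to dense orbits.
-/

theorem Filter.EventuallyEq.comp_of_preimage_null {X Y β : Type*} [MeasurableSpace X]
    [MeasurableSpace Y] {μ : Measure X} {ν : Measure Y} {f : X → Y}
    (hns : ∀ B : Set Y, MeasurableSet B → ν B = 0 → μ (f ⁻¹' B) = 0)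
    {g h : Y → β} (hgh : g =ᵐ[ν] h) : g ∘ f =ᵐ[μ] h ∘ f := by
  obtain ⟨B, hsub, hBm, hB0⟩ := exists_measurable_superset_of_null (ae_iff.1 hgh)
  exact ae_iff.2 (measure_mono_null (fun _ hx => hsub hx) (hns B hBm hB0))

theorem Dense.iterate_semiconj {E F : Type*} [TopologicalSpace E] [TopologicalSpace F]
    {S : E → E} {T : F → F} {J : E → F} (hJ : Continuous J) (hJd : DenseRange J)
    (hST : Function.Semiconj J S T) {x : E}
    (hx : Dense {y | ∃ n : ℕ, 1 ≤ n ∧ y = S^[n] x}) :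
    Dense {z | ∃ n : ℕ, 1 ≤ n ∧ z = T^[n] (J x)} := by
  refine (hJd.dense_image hJ hx).mono ?_
  rintro _ ⟨y, ⟨n, hn, rfl⟩, rfl⟩
  exact ⟨n, hn, hST.iterate_right n x⟩

namespace MeasureTheory.Lp

variable {X : Type*} [MeasurableSpace X] {p : ℝ≥0∞} [Fact (1 ≤ p)] {μ : Measure X}

variable (p μ) in
noncomputable def ofReIm : Lp ℝ p μ × Lp ℝ p μ →L[ℝ] Lp ℂ p μ :=
  (Complex.ofRealCLM.compLpL p μ).coprod ((Complex.I • Complex.ofRealCLM).compLpL p μ)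

theorem coeFn_ofReIm (y : Lp ℝ p μ × Lp ℝ p μ) :
    ofReIm p μ y =ᵐ[μ] fun x => Complex.mk (y.1 x) (y.2 x) := by
  filter_upwards [Lp.coeFn_add (Complex.ofRealCLM.compLpL p μ y.1)
      ((Complex.I • Complex.ofRealCLM).compLpL p μ y.2),
    Complex.ofRealCLM.coeFn_compLpL (p := p) (μ := μ) y.1,
    (Complex.I • Complex.ofRealCLM).coeFn_compLpL (p := p) (μ := μ) y.2] with x hsum h₁ h₂
  rw [ofReIm, ContinuousLinearMap.coprod_apply, hsum, Pi.add_apply, h₁, h₂]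
  simp [Complex.mk_eq_add_mul_I, mul_comm]

theorem ofReIm_surjective : Function.Surjective (ofReIm p μ) := by
  intro ψ
  refine ⟨(Complex.reCLM.compLpL p μ ψ, Complex.imCLM.compLpL p μ ψ), Lp.ext ?_⟩
  filter_upwards [coeFn_ofReIm (Complex.reCLM.compLpL p μ ψ, Complex.imCLM.compLpL p μ ψ),
    Complex.reCLM.coeFn_compLpL (p := p) (μ := μ) ψ,
    Complex.imCLM.coeFn_compLpL (p := p) (μ := μ) ψ] with x hx hre him
  simp [hx, hre, him]

theorem ofReIm_semiconj_comp {f : X → X}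
    (hns : ∀ B : Set X, MeasurableSet B → μ B = 0 → μ (f ⁻¹' B) = 0)
    {Tr : Lp ℝ p μ →L[ℝ] Lp ℝ p μ} (hTr : ∀ φ : Lp ℝ p μ, Tr φ =ᵐ[μ] (φ : X → ℝ) ∘ f)
    {Tc : Lp ℂ p μ →L[ℂ] Lp ℂ p μ} (hTc : ∀ φ : Lp ℂ p μ, Tc φ =ᵐ[μ] (φ : X → ℂ) ∘ f) :
    Function.Semiconj (ofReIm p μ) (Tr.prodMap Tr) Tc := by
  intro y
  refine Lp.ext ?_
  filter_upwards [coeFn_ofReIm (Tr.prodMap Tr y), hTr y.1, hTr y.2, hTc (ofReIm p μ y),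
    (coeFn_ofReIm y).comp_of_preimage_null hns] with x hJT h₁ h₂ hTJ hJ
  rw [hJT, hTJ, hJ]
  exact congrArg₂ Complex.mk h₁ h₂

end MeasureTheory.Lp

theorem stmt2_general {X : Type*} [MeasurableSpace X] (μ : Measure X)
    (f : X → X)
    (hns : ∀ B : Set X, MeasurableSet B → μ B = 0 → μ (f ⁻¹' B) = 0)
    (p : ℝ≥0∞) [Fact (1 ≤ p)]
    (Tc : Lp ℂ p μ →L[ℂ] Lp ℂ p μ)
    (hTc : ∀ φ : Lp ℂ p μ, (Tc φ : X → ℂ) =ᵐ[μ] (φ : X → ℂ) ∘ f)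
    (Tr : Lp ℝ p μ →L[ℝ] Lp ℝ p μ)
    (hTr : ∀ φ : Lp ℝ p μ, (Tr φ : X → ℝ) =ᵐ[μ] (φ : X → ℝ) ∘ f)
    (φ₁ φ₂ : Lp ℝ p μ)
    (hwm : Dense {y : Lp ℝ p μ × Lp ℝ p μ |
      ∃ n : ℕ, 1 ≤ n ∧ y = ((Tr.prodMap Tr) ^ n) (φ₁, φ₂)})
    (φ : Lp ℂ p μ)
    (hφ : ∀ᵐ x ∂μ, (φ : X → ℂ) x = Complex.mk ((φ₁ : X → ℝ) x) ((φ₂ : X → ℝ) x)) :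
    Dense {ψ : Lp ℂ p μ | ∃ n : ℕ, 1 ≤ n ∧ ψ = (Tc ^ n) φ} := by
  have hJφ : Lp.ofReIm p μ (φ₁, φ₂) = φ :=
    Lp.ext <| (Lp.coeFn_ofReIm (φ₁, φ₂)).trans (EventuallyEq.symm hφ)
  simp only [FunLike.coe_pow_eq_iterate] at hwm ⊢
  rw [← hJφ]
  exact hwm.iterate_semiconj (Lp.ofReIm p μ).continuous Lp.ofReIm_surjective.denseRange
    (Lp.ofReIm_semiconj_comp hns hTr hTc)

/-- If `T̃_f` is weakly mixing on `L^p(X;ℝ)` (i.e. `T̃_f × T̃_f` is hypercyclic),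
then `T_f` is hypercyclic on `L^p(X;ℂ)`; moreover if `(φ₁, φ₂)` is a hypercyclic vector for
`T̃_f × T̃_f`, then `φ₁ + i φ₂` is a hypercyclic vector for `T_f`. -/
theorem stmt2 {X : Type*} [MeasurableSpace X] (μ : Measure X) [SigmaFinite μ]
    (f : X → X) (hf : Measurable f)
    (hns : ∀ B : Set X, MeasurableSet B → μ B = 0 → μ (f ⁻¹' B) = 0)
    (p : ℝ≥0∞) [Fact (1 ≤ p)] (hp2 : p ≠ ⊤)
    (Tc : Lp ℂ p μ →L[ℂ] Lp ℂ p μ)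
    (hTc : ∀ φ : Lp ℂ p μ, (Tc φ : X → ℂ) =ᵐ[μ] (φ : X → ℂ) ∘ f)
    (Tr : Lp ℝ p μ →L[ℝ] Lp ℝ p μ)
    (hTr : ∀ φ : Lp ℝ p μ, (Tr φ : X → ℝ) =ᵐ[μ] (φ : X → ℝ) ∘ f)
    (φ₁ φ₂ : Lp ℝ p μ)
    (hwm : Dense {y : Lp ℝ p μ × Lp ℝ p μ |
      ∃ n : ℕ, 1 ≤ n ∧ y = ((Tr.prodMap Tr) ^ n) (φ₁, φ₂)})
    (φ : Lp ℂ p μ)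
    (hφ : ∀ᵐ x ∂μ, (φ : X → ℂ) x = Complex.mk ((φ₁ : X → ℝ) x) ((φ₂ : X → ℝ) x)) :
    Dense {ψ : Lp ℂ p μ | ∃ n : ℕ, 1 ≤ n ∧ ψ = (Tc ^ n) φ} :=
  stmt2_general μ f hns p Tc hTc Tr hTr φ₁ φ₂ hwm φ hφ
end

section
/- On a finite measure space, if the composition operator T_f on L^p(X;𝕂) is ℝ₊-supercyclic, then for every ε > 0 there exist a measurable set A ⊆ X and j ∈ ℕ such that μ(X \ A) < ε, μ(f^{-j}(A)) < ε, and the outer measure μ*(f^j(A)) < ε. -/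
open MeasureTheory Filter Topology
open scoped ENNReal NNReal

/-!
Approximate the constants `1` and `-1` by `l • Tⁿ φ` and `l' • Tᵐ φ` with `l, l' > 0`. Since
convergence in `Lp` implies convergence in measure, off a set of small measure `Re (φ ∘ fⁿ) > 0`
and `Re (φ ∘ fᵐ) < 0`. If `n ≤ m`, let `A` be the intersection of these two sets and `j = m - n`:
a point of `A` is sent by `fʲ` to a point where `Re (φ ∘ fⁿ) < 0`, and a point sent into `A` by `fʲ`
has `Re (φ ∘ fᵐ) > 0`; so both `fʲ '' A` and `f^{-j}(A)` lie in the small exceptional sets.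
-/

section Iterate

variable {α : Type*} {f : α → α} {P N : Set α} {n m : ℕ}

theorem image_iterate_sub_inter_subset_compl (hPN : Disjoint P N) (hnm : n ≤ m) :
    f^[m - n] '' (f^[n] ⁻¹' P ∩ f^[m] ⁻¹' N) ⊆ (f^[n] ⁻¹' P)ᶜ := by
  rintro _ ⟨x, ⟨-, hx⟩, rfl⟩ hP
  rw [Set.mem_preimage, ← Function.iterate_add_apply, Nat.add_sub_cancel' hnm] at hP
  exact Set.disjoint_left.1 hPN hP hx

theorem preimage_iterate_sub_inter_subset_compl (hPN : Disjoint P N) (hnm : n ≤ m) :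
    f^[m - n] ⁻¹' (f^[n] ⁻¹' P ∩ f^[m] ⁻¹' N) ⊆ (f^[m] ⁻¹' N)ᶜ := by
  rintro x ⟨hP, -⟩ hN
  rw [Set.mem_preimage, ← Function.iterate_add_apply, Nat.add_sub_cancel' hnm] at hP
  exact Set.disjoint_left.1 hPN hP hN

end Iterate

section Measure

variable {X : Type*} [MeasurableSpace X] {μ : Measure X} {f : X → X}

theorem exists_measurableSet_measure_iterate_lt (hf : Measurable f) {P N : Set X}
    (hP : MeasurableSet P) (hN : MeasurableSet N) (hPN : Disjoint P N) {n m : ℕ} {ε : ℝ≥0∞}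
    (hPn : μ (f^[n] ⁻¹' P)ᶜ < ε / 2) (hNm : μ (f^[m] ⁻¹' N)ᶜ < ε / 2) :
    ∃ (A : Set X) (j : ℕ), MeasurableSet A ∧ μ Aᶜ < ε ∧ μ (f^[j] ⁻¹' A) < ε ∧
      μ (f^[j] '' A) < ε := by
  wlog hnm : n ≤ m generalizing P N n m
  · exact this hN hP hPN.symm hNm hPn (le_of_not_ge hnm)
  refine ⟨_, m - n, (hf.iterate n hP).inter (hf.iterate m hN), ?_, ?_, ?_⟩
  · calc μ (f^[n] ⁻¹' P ∩ f^[m] ⁻¹' N)ᶜ ≤ μ (f^[n] ⁻¹' P)ᶜ + μ (f^[m] ⁻¹' N)ᶜ := by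
          rw [Set.compl_inter]; exact measure_union_le _ _
      _ < ε / 2 + ε / 2 := ENNReal.add_lt_add hPn hNm
      _ = ε := ENNReal.add_halves ε
  · exact (measure_mono (preimage_iterate_sub_inter_subset_compl hPN hnm)).trans_lt
      (hNm.trans_le ENNReal.half_le_self)
  · exact (measure_mono (image_iterate_sub_inter_subset_compl hPN hnm)).trans_lt
      (hPn.trans_le ENNReal.half_le_self)

theorem quasiMeasurePreserving_of_preimage_null (hf : Measurable f)
    (hns : ∀ B : Set X, MeasurableSet B → μ B = 0 → μ (f ⁻¹' B) = 0) :
    Measure.QuasiMeasurePreserving f μ μ :=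
  ⟨hf, Measure.AbsolutelyContinuous.mk fun B hB hB0 => by
    rw [Measure.map_apply hf hB]; exact hns B hB hB0⟩

theorem Lp.coeFn_pow_apply_ae_eq_comp_iterate {𝕜 E : Type*} [NormedField 𝕜]
    [NormedAddCommGroup E] [NormedSpace 𝕜 E] {p : ℝ≥0∞} [Fact (1 ≤ p)]
    (hf : Measure.QuasiMeasurePreserving f μ μ) {T : Lp E p μ →L[𝕜] Lp E p μ}
    (hT : ∀ φ : Lp E p μ, (T φ : X → E) =ᵐ[μ] (φ : X → E) ∘ f) (φ : Lp E p μ) (n : ℕ) :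
    ((T ^ n) φ : X → E) =ᵐ[μ] (φ : X → E) ∘ f^[n] := by
  induction n with
  | zero => rfl
  | succ n ih =>
    rw [pow_succ', mul_apply_eq_comp, Function.iterate_succ, ← Function.comp_assoc]
    exact (hT _).trans (hf.ae_eq_comp ih)

theorem RCLike.abs_le_dist_of_mul_re_nonpos {𝕜 : Type*} [RCLike 𝕜] {c : ℝ} {w : 𝕜}
    (h : c * RCLike.re w ≤ 0) : |c| ≤ dist w c :=
  calc |c| ≤ |RCLike.re w - c| := sq_le_sq.1 (by nlinarith)
    _ = |RCLike.re (w - c)| := by simp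
    _ ≤ dist w c := (RCLike.abs_re_le_norm _).trans_eq (dist_eq_norm w c).symm

theorem exists_measure_compl_preimage_iterate_re_lt [IsFiniteMeasure μ] {𝕜 : Type*} [RCLike 𝕜]
    {p : ℝ≥0∞} [Fact (1 ≤ p)] (hf : Measure.QuasiMeasurePreserving f μ μ)
    {T : Lp 𝕜 p μ →L[𝕜] Lp 𝕜 p μ} (hT : ∀ φ : Lp 𝕜 p μ, (T φ : X → 𝕜) =ᵐ[μ] (φ : X → 𝕜) ∘ f)
    {φ : Lp 𝕜 p μ}
    (hφ : Dense {y : Lp 𝕜 p μ | ∃ (l : ℝ) (n : ℕ), 0 < l ∧ 1 ≤ n ∧ y = ((l : 𝕜) • (T ^ n) φ)})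
    {c : ℝ} (hc : c ≠ 0) {η : ℝ≥0∞} (hη : 0 < η) :
    ∃ n, μ (f^[n] ⁻¹' {y | 0 < c * RCLike.re (φ y)})ᶜ < η := by
  set S := {y : Lp 𝕜 p μ | ∃ (l : ℝ) (n : ℕ), 0 < l ∧ 1 ≤ n ∧ y = ((l : 𝕜) • (T ^ n) φ)}
  set g := Lp.const p μ (c : 𝕜)
  have : (𝓝[S] g).NeBot := mem_closure_iff_nhdsWithin_neBot.1 (hφ g)
  have hconv : TendstoInMeasure μ (fun u : Lp 𝕜 p μ => (u : X → 𝕜)) (𝓝[S] g) g :=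
    tendstoInMeasure_of_tendsto_Lp (tendsto_id.mono_left nhdsWithin_le_nhds)
  obtain ⟨_, ⟨l, n, hl, -, rfl⟩, hsmall⟩ := (eventually_mem_nhdsWithin.and
    ((hconv _ (ENNReal.ofReal_pos.2 (abs_pos.2 hc))).eventually (gt_mem_nhds hη))).exists
  refine ⟨n, (measure_mono_ae ?_).trans_lt hsmall⟩
  filter_upwards [Lp.coeFn_smul (l : 𝕜) ((T ^ n) φ),
    Lp.coeFn_pow_apply_ae_eq_comp_iterate hf hT φ n, Lp.coeFn_const p μ (c : 𝕜)] with x hx hTx hgx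
  intro (hbad : ¬ 0 < c * RCLike.re (φ (f^[n] x)))
  show ENNReal.ofReal |c| ≤ edist _ _
  rw [hx, hgx, edist_dist]
  refine ENNReal.ofReal_le_ofReal (RCLike.abs_le_dist_of_mul_re_nonpos ?_)
  simp only [Pi.smul_apply, hTx, Function.comp_apply, smul_eq_mul, RCLike.re_ofReal_mul]
  nlinarith

end Measure

theorem stmt5_general {X : Type*} [MeasurableSpace X] (μ : Measure X) [IsFiniteMeasure μ]
    {𝕜 : Type*} [RCLike 𝕜]
    (f : X → X) (hf : Measurable f)
    (hns : ∀ B : Set X, MeasurableSet B → μ B = 0 → μ (f ⁻¹' B) = 0)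
    (p : ℝ≥0∞) [Fact (1 ≤ p)]
    (T : Lp 𝕜 p μ →L[𝕜] Lp 𝕜 p μ)
    (hT : ∀ φ : Lp 𝕜 p μ, (T φ : X → 𝕜) =ᵐ[μ] (φ : X → 𝕜) ∘ f)
    (hsc : ∃ φ : Lp 𝕜 p μ,
      Dense {y : Lp 𝕜 p μ | ∃ (l : ℝ) (n : ℕ), 0 < l ∧ 1 ≤ n ∧ y = ((l : 𝕜) • (T ^ n) φ)}) :
    ∀ ε : ℝ, 0 < ε → ∃ (A : Set X) (j : ℕ), MeasurableSet A ∧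
      μ Aᶜ < ENNReal.ofReal ε ∧
      μ ((f^[j]) ⁻¹' A) < ENNReal.ofReal ε ∧
      μ ((f^[j]) '' A) < ENNReal.ofReal ε := by
  intro ε hε
  obtain ⟨φ, hφ⟩ := hsc
  have hq := quasiMeasurePreserving_of_preimage_null hf hns
  have hη : 0 < ENNReal.ofReal ε / 2 := ENNReal.half_pos (ENNReal.ofReal_pos.2 hε).ne'
  obtain ⟨n, hn⟩ := exists_measure_compl_preimage_iterate_re_lt hq hT hφ one_ne_zero hη
  obtain ⟨m, hm⟩ := exists_measure_compl_preimage_iterate_re_lt hq hT hφ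
    (neg_ne_zero.2 one_ne_zero) hη
  have hre : Measurable fun y => RCLike.re (φ y) :=
    RCLike.continuous_re.measurable.comp (Lp.stronglyMeasurable φ).measurable
  refine exists_measurableSet_measure_iterate_lt hf (measurableSet_lt measurable_const
    (hre.const_mul _)) (measurableSet_lt measurable_const (hre.const_mul _)) ?_ hn hm
  exact Set.disjoint_left.2 fun y h₁ h₂ => by simp only [Set.mem_ofPred_eq] at h₁ h₂; linarith

/-- On a finite measure space, if the composition operator `T_f` on `L^p(X;𝕂)`
is `ℝ₊`-supercyclic, then for every `ε > 0` there exist a measurable set `A` and `j ∈ ℕ`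
with `μ(X \ A) < ε`, `μ(f^{-j}(A)) < ε` and outer measure `μ*(f^j(A)) < ε`. -/
theorem stmt5 {X : Type*} [MeasurableSpace X] (μ : Measure X) [IsFiniteMeasure μ]
    {𝕜 : Type*} [RCLike 𝕜]
    (f : X → X) (hf : Measurable f)
    (hns : ∀ B : Set X, MeasurableSet B → μ B = 0 → μ (f ⁻¹' B) = 0)
    (p : ℝ≥0∞) [Fact (1 ≤ p)] (hp2 : p ≠ ⊤)
    (T : Lp 𝕜 p μ →L[𝕜] Lp 𝕜 p μ)
    (hT : ∀ φ : Lp 𝕜 p μ, (T φ : X → 𝕜) =ᵐ[μ] (φ : X → 𝕜) ∘ f)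
    (hsc : ∃ φ : Lp 𝕜 p μ,
      Dense {y : Lp 𝕜 p μ | ∃ (l : ℝ) (n : ℕ), 0 < l ∧ 1 ≤ n ∧ y = ((l : 𝕜) • (T ^ n) φ)}) :
    ∀ ε : ℝ, 0 < ε → ∃ (A : Set X) (j : ℕ), MeasurableSet A ∧
      μ Aᶜ < ENNReal.ofReal ε ∧
      μ ((f^[j]) ⁻¹' A) < ENNReal.ofReal ε ∧
      μ ((f^[j]) '' A) < ENNReal.ofReal ε :=
  stmt5_general μ f hf hns p T hT hsc
end
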